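/- Let G be a graph on n vertices with arboricity at most λ and d > 2λ. Removing the layer of smallest index from the subgraph induced by layers ≥ i decreases the number of vertices by a factor of at least d/(2λ): |L_{i+1} ∪ ... ∪ L_ℓ| ≤ (2λ/d)·|L_i ∪ ... ∪ L_ℓ|. -/

import Mathlib

def HasArboricityAtMost {V : Type*} (G : SimpleGraph V) (lam : ℕ) : Prop :=
  ∃ F : Fin lam → SimpleGraph V,
    (∀ i, (F i).IsAcyclic) ∧ (∀ i, F i ≤ G) ∧
    (∀ e ∈ G.edgeSet, ∃! i, e ∈ (F i).edgeSet)

/-- The greedy peeling process: `peel G d i` is the set of vertices in layers of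
index at least `i+1` (1-indexed). -/
def peel {V : Type*} [Fintype V] [DecidableEq V] (G : SimpleGraph V)
    [DecidableRel G.Adj] (d : ℕ) : ℕ → Finset V
  | 0 => Finset.univ
  | i + 1 => (peel G d i).filter (fun v => d < (G.neighborFinset v ∩ peel G d i).card)

/-!
Every vertex of `peel G d (i + 1)` has more than `d` neighbours in `S = peel G d i`, so
`d * #(peel G d (i + 1))` is at most the degree sum of the subgraph induced on `S`. Splitting `G`
into `lam` forests bounds that degree sum by `2 * lam * #S`, because a forest on `S` has at most
`#S` edges.
-/

open Finset

namespace SimpleGraph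

variable {V : Type*} {G : SimpleGraph V}

-- A forest extends to a spanning tree of the complete graph.
theorem IsAcyclic.card_edgeFinset_le [Fintype V] [Fintype G.edgeSet] (hG : G.IsAcyclic) :
    #G.edgeFinset ≤ Fintype.card V := by
  cases isEmpty_or_nonempty V
  · simp [card_eq_zero, eq_empty_iff_forall_notMem]
  classical
  obtain ⟨T, hGT, -, hT⟩ := connected_top.exists_isTree_le_of_le_of_isAcyclic le_top hG
  calc #G.edgeFinset ≤ #T.edgeFinset := card_le_card (edgeFinset_mono hGT)
    _ ≤ Fintype.card V := by have := hT.card_edgeFinset; omega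

theorem IsAcyclic.sum_card_neighborFinset_inter_le [Fintype V] [DecidableEq V]
    [DecidableRel G.Adj] (hG : G.IsAcyclic) (S : Finset V) :
    ∑ v ∈ S, #(G.neighborFinset v ∩ S) ≤ 2 * #S := by
  calc ∑ v ∈ S, #(G.neighborFinset v ∩ S)
      = ∑ v : (S : Set V), (G.induce S).degree v := by
        rw [← sum_coe_sort]
        refine Fintype.sum_congr _ _ fun v => ?_
        have hmap := map_neighborFinset_induce (G := G) (s := (S : Set V)) v
        rw [toFinset_coe] at hmap
        rw [← hmap, card_map]
        convert card_neighborFinset_eq_degree _ _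
    _ = 2 * #(G.induce S).edgeFinset := sum_degrees_eq_twice_card_edges _
    _ ≤ 2 * #S := by
        have := (hG.induce (S : Set V)).card_edgeFinset_le
        simp only [Finset.coe_sort_coe, Fintype.card_coe] at this
        omega

theorem card_neighborFinset_inter_le_sum [Fintype V] [DecidableEq V] [DecidableRel G.Adj]
    {ι : Type*} [Fintype ι] (F : ι → SimpleGraph V) [∀ i, DecidableRel (F i).Adj]
    (hcover : ∀ ⦃u v⦄, G.Adj u v → ∃ i, (F i).Adj u v) (v : V) (S : Finset V) :
    #(G.neighborFinset v ∩ S) ≤ ∑ i, #((F i).neighborFinset v ∩ S) := by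
  refine (card_le_card fun w hw => ?_).trans card_biUnion_le
  obtain ⟨hvw, hwS⟩ := mem_inter.1 hw
  obtain ⟨i, hi⟩ := hcover ((mem_neighborFinset _ _ _).1 hvw)
  exact mem_biUnion.2 ⟨i, mem_univ i, mem_inter.2 ⟨(mem_neighborFinset _ _ _).2 hi, hwS⟩⟩

end SimpleGraph

open SimpleGraph

theorem HasArboricityAtMost.sum_card_neighborFinset_inter_le {V : Type*} [Fintype V]
    [DecidableEq V] {G : SimpleGraph V} [DecidableRel G.Adj] {lam : ℕ}
    (h : HasArboricityAtMost G lam) (S : Finset V) :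
    ∑ v ∈ S, #(G.neighborFinset v ∩ S) ≤ 2 * lam * #S := by
  classical
  obtain ⟨F, hacyclic, -, hcover⟩ := h
  calc ∑ v ∈ S, #(G.neighborFinset v ∩ S)
      ≤ ∑ v ∈ S, ∑ i, #((F i).neighborFinset v ∩ S) :=
        sum_le_sum fun v _ => card_neighborFinset_inter_le_sum F
          (fun u w huw => (hcover s(u, w) huw).exists) v S
    _ = ∑ i, ∑ v ∈ S, #((F i).neighborFinset v ∩ S) := sum_comm
    _ ≤ ∑ _i : Fin lam, 2 * #S :=
        sum_le_sum fun i _ => (hacyclic i).sum_card_neighborFinset_inter_le S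
    _ = 2 * lam * #S := by simp only [sum_const, card_univ, Fintype.card_fin, smul_eq_mul]; ring

section Peel

variable {V : Type*} [Fintype V] [DecidableEq V] (G : SimpleGraph V) [DecidableRel G.Adj]
  (d : ℕ)

theorem peel_succ_subset (i : ℕ) : peel G d (i + 1) ⊆ peel G d i := filter_subset _ _

theorem lt_card_neighborFinset_inter_peel {i : ℕ} {v : V} (hv : v ∈ peel G d (i + 1)) :
    d < #(G.neighborFinset v ∩ peel G d i) :=
  (mem_filter.1 hv).2

theorem mul_card_peel_succ_le_sum (i : ℕ) :
    d * #(peel G d (i + 1)) ≤ ∑ v ∈ peel G d i, #(G.neighborFinset v ∩ peel G d i) :=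
  calc d * #(peel G d (i + 1)) = ∑ _v ∈ peel G d (i + 1), d := by
        rw [sum_const, smul_eq_mul, mul_comm]
    _ ≤ ∑ v ∈ peel G d (i + 1), #(G.neighborFinset v ∩ peel G d i) :=
        sum_le_sum fun v hv => (lt_card_neighborFinset_inter_peel G d hv).le
    _ ≤ ∑ v ∈ peel G d i, #(G.neighborFinset v ∩ peel G d i) :=
        sum_le_sum_of_subset (peel_succ_subset G d i)

end Peel

/-- removing the layer of smallest index from the subgraph induced by the
layers of index ≥ i decreases the number of vertices by a factor of at least
`d / (2 * lam)`: `|peel G d (i+1)| ≤ (2 * lam / d) * |peel G d i|`. -/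
theorem H_partition_geometric_decay {V : Type*} [Fintype V] [DecidableEq V]
    (G : SimpleGraph V) [DecidableRel G.Adj] (lam d : ℕ)
    (harb : HasArboricityAtMost G lam) (hd : 2 * lam < d) :
    ∀ i : ℕ, ((peel G d (i + 1)).card : ℝ) ≤ ((2 * lam : ℝ) / d) * (peel G d i).card := by
  intro i
  have hcount : d * #(peel G d (i + 1)) ≤ 2 * lam * #(peel G d i) :=
    (mul_card_peel_succ_le_sum G d i).trans (harb.sum_card_neighborFinset_inter_le _)
  have hd_pos : (0 : ℝ) < d := by exact_mod_cast (Nat.zero_le _).trans_lt hd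
  rw [div_mul_eq_mul_div, le_div_iff₀ hd_pos, mul_comm]
  exact_mod_cast hcount
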